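/- arXiv:2106.13902 — 2 statements merged into one kernel-verified Lean document; each statement's English description precedes it below -/
import Mathlib

section
/- Let γ ≥ 2β > 0 and set α = (γ + sqrt(γ² − 4β²))/2. Suppose a sequence (E_n) with E_n > −1 satisfies the recurrence E_{n+1} = f_γ(n) + (β²/α²)·[1 + f_γ(n) − (1 + f_β(n))²/(1 + E_n)], where f_γ(n) → 0 and f_β(n) → 0 as n → ∞, and suppose (E_n) is bounded above and bounded below away from −1 (i.e., there exists σ > 0 with E_n ≥ 1/(ασ) − 1 for all n). If (E_n) has a convergent subsequence with limit E_∞, then E_∞ = 0 or E_∞ = β²/α² − 1. -/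
/-!
Up to an error tending to zero (because `1 + E n` stays bounded away from `0`), the recurrence is
the iteration `E (n+1) = g (E n)` of the increasing Möbius map `g x = c x / (1 + x)`, with
`c = β² / α²`. A cluster point `L` of such an asymptotic orbit of an increasing continuous map is
a fixed point: if, say, `g L < L`, then once the orbit comes close to `L` it is pushed below `L`
by a fixed margin and can never return. The fixed points of `g` on `(-1, ∞)` are `0` and `c - 1`.
-/

open Filter Topology Set

theorem MonotoneOn.le_apply_of_mapClusterPt {g : ℝ → ℝ} {s : Set ℝ} {x : ℕ → ℝ} {L : ℝ}
    (hg : MonotoneOn g s) (hgc : ContinuousAt g L) (hs : s ∈ 𝓝 L) (hx : ∀ n, x n ∈ s)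
    (hε : Tendsto (fun n => x (n + 1) - g (x n)) atTop (𝓝 0)) (hL : MapClusterPt L atTop x) :
    L ≤ g L := by
  by_contra! hgL
  -- choose `δ > 0` so small that `x n ≤ L + δ` forces `x (n + 1) < L - δ` for large `n`
  have hshift : Tendsto (fun δ : ℝ => L + δ) (𝓝 0) (𝓝 L) :=
    (continuous_const_add L).tendsto' 0 L (add_zero L)
  have hval : Tendsto (fun δ => g (L + δ) + 2 * δ) (𝓝 0) (𝓝 (g L)) := by
    simpa using (hgc.tendsto.comp hshift).add (tendsto_id.const_mul 2)
  obtain ⟨δ, ⟨hgδ, hδs⟩, hδ0⟩ := ((eventually_nhdsWithin_of_eventually_nhds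
    ((hval.eventually_lt_const hgL).and (hshift hs))).and (self_mem_nhdsWithin (s := Ioi 0))).exists
  obtain ⟨N, hN⟩ := eventually_atTop.1 (hε.eventually_lt_const hδ0)
  have hstep : ∀ n ≥ N, x n ≤ L + δ → x (n + 1) < L - δ := fun n hn hxn => by
    have := hg (hx n) hδs hxn
    linarith [hN n hn]
  obtain ⟨n₀, hn₀, hxn₀⟩ :=
    (hL.frequently (Iio_mem_nhds (by linarith : L < L + δ))).forall_exists_of_atTop N
  have htrap : ∀ n ≥ n₀ + 1, x n < L - δ :=
    Nat.le_induction (hstep n₀ hn₀ hxn₀.le) fun n hn ih => hstep n (by omega) (by linarith)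
  obtain ⟨n, hn, hxn⟩ :=
    (hL.frequently (Ioi_mem_nhds (by linarith : L - δ < L))).forall_exists_of_atTop (n₀ + 1)
  exact (htrap n hn).not_gt hxn

theorem MonotoneOn.apply_eq_of_mapClusterPt {g : ℝ → ℝ} {s : Set ℝ} {x : ℕ → ℝ} {L : ℝ}
    (hg : MonotoneOn g s) (hgc : ContinuousAt g L) (hs : s ∈ 𝓝 L) (hx : ∀ n, x n ∈ s)
    (hε : Tendsto (fun n => x (n + 1) - g (x n)) atTop (𝓝 0)) (hL : MapClusterPt L atTop x) :
    g L = L := by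
  refine le_antisymm ?_ (hg.le_apply_of_mapClusterPt hgc hs hx hε hL)
  have hdual := MonotoneOn.le_apply_of_mapClusterPt (g := fun y => -g (-y)) (s := -s)
    (x := fun n => -x n) (L := -L)
    (fun a ha b hb hab => neg_le_neg (hg hb ha (neg_le_neg hab)))
    ((ContinuousAt.comp (x := -L) (by simpa using hgc) continuousAt_neg).neg)
    (continuous_neg.continuousAt.preimage_mem_nhds (by simpa using hs))
    (fun n => by simpa using hx n)
    (by simpa [neg_add_eq_sub] using hε.neg)
    (hL.tendsto_comp (continuous_neg.tendsto L))
  simpa using hdual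

noncomputable def mobiusMap (c x : ℝ) : ℝ := c * (1 - 1 / (1 + x))

theorem mobiusMap_monotoneOn {c : ℝ} (hc : 0 ≤ c) : MonotoneOn (mobiusMap c) (Ioi (-1)) := by
  intro a ha b _ hab
  have : 0 < 1 + a := by linarith [mem_Ioi.1 ha]
  unfold mobiusMap
  gcongr

theorem mobiusMap_continuousAt {c x : ℝ} (hx : x ≠ -1) : ContinuousAt (mobiusMap c) x := by
  have : 1 + x ≠ 0 := fun h => hx (by linarith)
  unfold mobiusMap
  fun_prop (disch := assumption)

theorem mobiusMap_eq_self_iff {c x : ℝ} (hx : x ≠ -1) :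
    mobiusMap c x = x ↔ x = 0 ∨ x = c - 1 := by
  have hx' : 1 + x ≠ 0 := fun h => hx (by linarith)
  have key : mobiusMap c x - x = x * (c - 1 - x) / (1 + x) := by
    unfold mobiusMap
    field_simp
    ring
  rw [← sub_eq_zero, key, div_eq_zero_iff, mul_eq_zero, sub_eq_zero (a := c - 1), eq_comm (a := c - 1)]
  simp [hx']

theorem tendsto_sub_mobiusMap {c m : ℝ} {E fβ fγ : ℕ → ℝ} (hm : 0 < m) (hE : ∀ n, m ≤ 1 + E n)
    (hrec : ∀ n, E (n + 1) = fγ n + c * (1 + fγ n - (1 + fβ n) ^ 2 / (1 + E n)))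
    (hfγ : Tendsto fγ atTop (𝓝 0)) (hfβ : Tendsto fβ atTop (𝓝 0)) :
    Tendsto (fun n => E (n + 1) - mobiusMap c (E n)) atTop (𝓝 0) := by
  have hdecomp : ∀ n, E (n + 1) - mobiusMap c (E n) =
      (1 + c) * fγ n + c * (1 - (1 + fβ n) ^ 2) * (1 + E n)⁻¹ := by
    intro n
    have : 1 + E n ≠ 0 := (hm.trans_le (hE n)).ne'
    rw [hrec n, mobiusMap]
    field_simp
    ring
  have hsq : Tendsto (fun n => c * (1 - (1 + fβ n) ^ 2)) atTop (𝓝 0) := by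
    simpa using (((hfβ.const_add 1).pow 2).const_sub 1).const_mul c
  have hbdd : IsBoundedUnder (· ≤ ·) atTop (fun n => ‖(1 + E n)⁻¹‖) :=
    isBoundedUnder_of ⟨m⁻¹, fun n => by
      rw [norm_inv, Real.norm_of_nonneg (hm.le.trans (hE n))]
      exact inv_anti₀ hm (hE n)⟩
  simp_rw [hdecomp]
  simpa using (hfγ.const_mul (1 + c)).add (hsq.zero_mul_isBoundedUnder_le hbdd)

theorem stmt1_general (β γ : ℝ) (hβ : 0 < β) (hγ : 2 * β ≤ γ)
    (α : ℝ) (hα : α = (γ + Real.sqrt (γ ^ 2 - 4 * β ^ 2)) / 2)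
    (E fβ fγ : ℕ → ℝ)
    (hE : ∀ n, -1 < E n)
    (hrec : ∀ n, E (n + 1) = fγ n + (β ^ 2 / α ^ 2) *
      (1 + fγ n - (1 + fβ n) ^ 2 / (1 + E n)))
    (hfγ : Filter.Tendsto fγ Filter.atTop (nhds 0))
    (hfβ : Filter.Tendsto fβ Filter.atTop (nhds 0))
    (σ : ℝ) (hσ : 0 < σ) (hlb : ∀ n, 1 / (α * σ) - 1 ≤ E n)
    (φ : ℕ → ℕ) (hφ : StrictMono φ) (Elim : ℝ)
    (hlim : Filter.Tendsto (E ∘ φ) Filter.atTop (nhds Elim)) :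
    Elim = 0 ∨ Elim = β ^ 2 / α ^ 2 - 1 := by
  have hα₀ : 0 < α := by
    rw [hα]
    linarith [Real.sqrt_nonneg (γ ^ 2 - 4 * β ^ 2)]
  have hm : 0 < 1 / (α * σ) := by positivity
  have hElim : -1 < Elim := by
    linarith [ge_of_tendsto' hlim fun k => hlb (φ k)]
  have hfix : mobiusMap (β ^ 2 / α ^ 2) Elim = Elim :=
    (mobiusMap_monotoneOn (by positivity)).apply_eq_of_mapClusterPt
      (mobiusMap_continuousAt hElim.ne') (Ioi_mem_nhds hElim) hE
      (tendsto_sub_mobiusMap hm (fun n => by linarith [hlb n]) hrec hfγ hfβ)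
      (hlim.mapClusterPt.of_comp hφ.tendsto_atTop)
  exact (mobiusMap_eq_self_iff hElim.ne').1 hfix

/-- If `γ ≥ 2β > 0`, `α = (γ + √(γ² - 4β²))/2`, and `(E n)` with `E n > -1` satisfies
the recurrence `E (n+1) = fγ n + (β²/α²)·(1 + fγ n - (1 + fβ n)²/(1 + E n))` with
`fγ, fβ → 0`, is bounded above and bounded below by `1/(ασ) - 1`, then any
subsequential limit of `(E n)` is `0` or `β²/α² - 1`. -/
theorem stmt1 (β γ : ℝ) (hβ : 0 < β) (hγ : 2 * β ≤ γ)
    (α : ℝ) (hα : α = (γ + Real.sqrt (γ ^ 2 - 4 * β ^ 2)) / 2)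
    (E fβ fγ : ℕ → ℝ)
    (hE : ∀ n, -1 < E n)
    (hrec : ∀ n, E (n + 1) = fγ n + (β ^ 2 / α ^ 2) *
      (1 + fγ n - (1 + fβ n) ^ 2 / (1 + E n)))
    (hfγ : Filter.Tendsto fγ Filter.atTop (nhds 0))
    (hfβ : Filter.Tendsto fβ Filter.atTop (nhds 0))
    (C : ℝ) (hub : ∀ n, E n ≤ C)
    (σ : ℝ) (hσ : 0 < σ) (hlb : ∀ n, 1 / (α * σ) - 1 ≤ E n)
    (φ : ℕ → ℕ) (hφ : StrictMono φ) (Elim : ℝ)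
    (hlim : Filter.Tendsto (E ∘ φ) Filter.atTop (nhds Elim)) :
    Elim = 0 ∨ Elim = β ^ 2 / α ^ 2 - 1 :=
  stmt1_general β γ hβ hγ α hα E fβ fγ hE hrec hfγ hfβ σ hσ hlb φ hφ Elim hlim
end

section
/- For the MINRES algorithm applied to W x = b with W symmetric positive definite, ‖b‖₂ = 1, and x_0 = 0: with the same Cholesky data α_j, β_j of the Lanczos Jacobi matrix T = H H^T as for CG, the MINRES residual satisfies ‖r_k‖₂ = (1 + Σ_{j=1}^{k} Π_{ℓ=0}^{j−1} (α_ℓ²/β_ℓ²))^{−1/2} for k < n. -/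
open Matrix Finset

/-!
The Lanczos relation `W Q = Q T`, with `Q e₀ = b` and `Q` having orthonormal columns, carries
the Krylov spaces of `(T, e₀)` isometrically onto those of `(W, b)`. Since `T = H Hᵀ` is
tridiagonal with nonzero subdiagonal entries `α_j β_j`, its `k`-th Krylov space is spanned by
`e₀, …, e_{k-1}`. The minimal residual `u = e₀ - T c` is then supported on the first `k + 1`
coordinates and orthogonal to `T K_k`, i.e. `H (Hᵀ u)` vanishes on the first `k` coordinates.
Hence so does `Hᵀ u`, and the bidiagonal recursion `α_i u_i + β_i u_{i+1} = 0` forces `u = s v`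
with `v = (1, p₁, …, p_k, 0, …, 0)`, `p_j = ∏_{ℓ<j} (-α_ℓ/β_ℓ)`. As `T v` also vanishes on the
first `k` coordinates, `u ⬝ v = e₀ ⬝ v = 1`, so `s = ‖v‖⁻²` and `‖u‖² = ‖v‖⁻² = (1 + ∑_j p_j²)⁻¹`.
-/

def krylovSubspace {ι R : Type*} [Fintype ι] [DecidableEq ι] [CommRing R]
    (A : Matrix ι ι R) (b : ι → R) (k : ℕ) : Submodule R (ι → R) :=
  Submodule.span R {v | ∃ j, j < k ∧ v = (A ^ j) *ᵥ b}

lemma krylovSubspace_mono {ι R : Type*} [Fintype ι] [DecidableEq ι] [CommRing R]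
    (A : Matrix ι ι R) (b : ι → R) {k l : ℕ} (h : k ≤ l) :
    krylovSubspace A b k ≤ krylovSubspace A b l :=
  Submodule.span_mono fun _ ⟨j, hj, hv⟩ => ⟨j, by omega, hv⟩

def supportedBelow (R : Type*) [Semiring R] (n k : ℕ) : Submodule R (Fin n → R) where
  carrier := {x | ∀ i : Fin n, k ≤ (i : ℕ) → x i = 0}
  add_mem' hx hy i hi := by simp [hx i hi, hy i hi]
  zero_mem' _ _ := rfl
  smul_mem' c x hx i hi := by simp [hx i hi]

lemma supportedBelow_mono {R : Type*} [Semiring R] {n k l : ℕ} (h : k ≤ l) :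
    supportedBelow R n k ≤ supportedBelow R n l :=
  fun _ hx i hi => hx i (h.trans hi)

section
variable {ι κ R : Type*} [Fintype ι] [Fintype κ] [CommRing R]

lemma mul_transpose_mulVec_dotProduct (A : Matrix ι κ R) (x y : ι → R) :
    (A * Aᵀ) *ᵥ x ⬝ᵥ y = (Aᵀ *ᵥ x) ⬝ᵥ (Aᵀ *ᵥ y) := by
  rw [← mulVec_mulVec, dotProduct_comm, dotProduct_mulVec, ← mulVec_transpose, dotProduct_comm]

lemma mulVec_dotProduct_mulVec_of_transpose_mul_self [DecidableEq κ] {Q : Matrix ι κ R}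
    (hQ : Qᵀ * Q = 1) (x y : κ → R) : (Q *ᵥ x) ⬝ᵥ (Q *ᵥ y) = x ⬝ᵥ y := by
  rw [dotProduct_mulVec, ← vecMul_transpose, vecMul_vecMul, hQ, vecMul_one]

lemma krylovSubspace_mulVec_of_mul_eq_mul [DecidableEq ι] [DecidableEq κ] {A : Matrix ι ι R}
    {B : Matrix κ κ R} {Q : Matrix ι κ R} (hAQ : A * Q = Q * B) (c : κ → R) (k : ℕ) :
    krylovSubspace A (Q *ᵥ c) k = (krylovSubspace B c k).map Q.mulVecLin := by
  have hpow (j : ℕ) : (A ^ j) *ᵥ (Q *ᵥ c) = Q *ᵥ ((B ^ j) *ᵥ c) := by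
    suffices A ^ j * Q = Q * B ^ j by rw [mulVec_mulVec, mulVec_mulVec, this]
    induction j with
    | zero => simp
    | succ j ih => rw [pow_succ, pow_succ, Matrix.mul_assoc, hAQ, ← Matrix.mul_assoc, ih,
        Matrix.mul_assoc]
  rw [krylovSubspace, krylovSubspace, ← Submodule.span_image]
  congr 1
  ext v
  simp only [Set.mem_ofPred_eq, Set.mem_image, mulVecLin_apply, hpow]
  constructor
  · rintro ⟨j, hj, rfl⟩; exact ⟨_, ⟨j, hj, rfl⟩, rfl⟩
  · rintro ⟨_, ⟨j, hj, rfl⟩, rfl⟩; exact ⟨j, hj, rfl⟩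

end

lemma dotProduct_eq_zero_of_forall_dotProduct_self_le {ι K : Type*} [Fintype ι] [Field K]
    [LinearOrder K] [IsStrictOrderedRing K] {r z : ι → K}
    (h : ∀ t : K, r ⬝ᵥ r ≤ (r - t • z) ⬝ᵥ (r - t • z)) : r ⬝ᵥ z = 0 := by
  have hz : 0 ≤ z ⬝ᵥ z := Finset.sum_nonneg fun i _ => mul_self_nonneg (z i)
  have key := h ((r ⬝ᵥ z) / (z ⬝ᵥ z + 1))
  simp only [sub_dotProduct, dotProduct_sub, smul_dotProduct, dotProduct_smul, smul_eq_mul,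
    dotProduct_comm z r] at key
  have hpos : 0 < z ⬝ᵥ z + 1 := by linarith
  field_simp at key
  nlinarith [sq_nonneg (r ⬝ᵥ z)]

section Hessenberg
variable {K : Type*} [Field K] {n : ℕ} {A : Matrix (Fin n) (Fin n) K}
  (hA : ∀ i j : Fin n, (j : ℕ) + 1 < i → A i j = 0)
include hA

lemma mulVec_mem_supportedBelow_succ {k : ℕ} {x : Fin n → K} (hx : x ∈ supportedBelow K n k) :
    A *ᵥ x ∈ supportedBelow K n (k + 1) := by
  intro i hi
  simp only [mulVec, dotProduct]
  refine Finset.sum_eq_zero fun j _ => ?_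
  by_cases hj : k ≤ (j : ℕ)
  · simp [hx j hj]
  · simp [hA i j (by omega)]

lemma mulVec_apply_succ_of_mem_supportedBelow {k : ℕ} (hk : k + 1 < n) {x : Fin n → K}
    (hx : x ∈ supportedBelow K n (k + 1)) :
    (A *ᵥ x) ⟨k + 1, hk⟩ = A ⟨k + 1, hk⟩ ⟨k, by omega⟩ * x ⟨k, by omega⟩ := by
  simp only [mulVec, dotProduct]
  refine Finset.sum_eq_single _ (fun j _ hj => ?_) (by simp)
  have hj' : (j : ℕ) ≠ k := fun h => hj (Fin.ext h)
  rcases lt_or_gt_of_ne hj' with h | h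
  · simp [hA ⟨k + 1, hk⟩ j (by simp only; omega)]
  · simp [hx j h]

variable (hn : 0 < n)

lemma pow_mulVec_single_zero_mem (j : ℕ) :
    (A ^ j) *ᵥ Pi.single ⟨0, hn⟩ 1 ∈ supportedBelow K n (j + 1) := by
  induction j with
  | zero =>
    intro i hi
    rw [pow_zero, one_mulVec, Pi.single_eq_of_ne fun h => by simp [h] at hi]
  | succ j ih => rw [pow_succ', ← mulVec_mulVec]; exact mulVec_mem_supportedBelow_succ hA ih

lemma pow_mulVec_single_zero_apply_ne_zero (hsub : ∀ i j : Fin n, (i : ℕ) = j + 1 → A i j ≠ 0)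
    (j : ℕ) (hj : j < n) : ((A ^ j) *ᵥ Pi.single ⟨0, hn⟩ 1) ⟨j, hj⟩ ≠ 0 := by
  induction j with
  | zero => simp
  | succ j ih =>
    rw [pow_succ', ← mulVec_mulVec,
      mulVec_apply_succ_of_mem_supportedBelow hA hj (pow_mulVec_single_zero_mem hA hn j)]
    exact mul_ne_zero (hsub _ _ rfl) (ih (by omega))

/-- The Krylov subspaces from `e₀` of an unreduced upper Hessenberg matrix (`hA`, `hsub`) are
spanned by the leading unit vectors. -/
lemma krylovSubspace_single_zero (hsub : ∀ i j : Fin n, (i : ℕ) = j + 1 → A i j ≠ 0)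
    {k : ℕ} (hk : k ≤ n) : krylovSubspace A (Pi.single ⟨0, hn⟩ 1) k = supportedBelow K n k := by
  induction k with
  | zero =>
    refine le_antisymm (by simp [krylovSubspace]) fun x hx => ?_
    rw [show x = 0 from funext fun i => hx i (Nat.zero_le _)]
    exact Submodule.zero_mem _
  | succ k ih =>
    refine le_antisymm (Submodule.span_le.2 ?_) fun x hx => ?_
    · rintro _ ⟨j, hj, rfl⟩
      exact supportedBelow_mono (by omega) (pow_mulVec_single_zero_mem hA hn j)
    set p := (A ^ k) *ᵥ Pi.single ⟨0, hn⟩ 1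
    have hp : p ⟨k, by omega⟩ ≠ 0 :=
      pow_mulVec_single_zero_apply_ne_zero hA hn hsub k (by omega)
    have hpk : p ∈ krylovSubspace A (Pi.single ⟨0, hn⟩ 1) (k + 1) :=
      Submodule.subset_span ⟨k, by omega, rfl⟩
    have hrest : x - (x ⟨k, by omega⟩ / p ⟨k, by omega⟩) • p ∈ supportedBelow K n k := by
      intro i hi
      rcases hi.lt_or_eq with hi | hi
      · have hpi : p i = 0 := pow_mulVec_single_zero_mem hA hn k i hi
        simp [hx i hi, hpi]
      · rw [show i = ⟨k, by omega⟩ from Fin.ext hi.symm]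
        simp [hp]
    rw [← sub_add_cancel x ((x ⟨k, by omega⟩ / p ⟨k, by omega⟩) • p)]
    exact add_mem (krylovSubspace_mono _ _ k.le_succ (ih (by omega) ▸ hrest))
      (Submodule.smul_mem _ _ hpk)

end Hessenberg

section LowerTriangular
variable {K : Type*} [Field K] {n : ℕ} {L : Matrix (Fin n) (Fin n) K}

lemma mulVec_apply_eq_zero_of_lowerTriangular (hL : ∀ i j : Fin n, i < j → L i j = 0)
    {k : ℕ} {z : Fin n → K} (hz : ∀ j : Fin n, (j : ℕ) < k → z j = 0)
    (i : Fin n) (hi : (i : ℕ) < k) : (L *ᵥ z) i = 0 := by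
  simp only [mulVec, dotProduct]
  refine Finset.sum_eq_zero fun j _ => ?_
  rcases lt_or_ge i j with h | h
  · simp [hL i j h]
  · simp [hz j (by omega)]

lemma eq_zero_of_lowerTriangular_mulVec_apply_eq_zero (hL : ∀ i j : Fin n, i < j → L i j = 0)
    (hdiag : ∀ i, L i i ≠ 0) {k : ℕ} {z : Fin n → K}
    (hLz : ∀ i : Fin n, (i : ℕ) < k → (L *ᵥ z) i = 0) (i : Fin n) (hi : (i : ℕ) < k) :
    z i = 0 := by
  induction i using WellFoundedLT.induction with
  | _ i ih =>
    have hsum : (L *ᵥ z) i = L i i * z i := by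
      simp only [mulVec, dotProduct]
      refine Finset.sum_eq_single _ (fun j _ hj => ?_) (by simp)
      rcases lt_or_gt_of_ne hj with h | h
      · simp [ih j h (by omega)]
      · simp [hL i j h]
    simpa [hsum, hdiag i] using hLz i hi

lemma dotProduct_eq_zero_of_mem_supportedBelow {k : ℕ} {x y : Fin n → K}
    (hx : x ∈ supportedBelow K n k) (hy : ∀ i : Fin n, (i : ℕ) < k → y i = 0) : x ⬝ᵥ y = 0 :=
  Finset.sum_eq_zero fun i _ => by
    rcases lt_or_ge (i : ℕ) k with h | h
    · simp [hy i h]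
    · simp [hx i h]

end LowerTriangular

def lowerBidiagonal {K : Type*} [Zero K] (α β : ℕ → K) (n : ℕ) : Matrix (Fin n) (Fin n) K :=
  of fun i j => if (i : ℕ) = j then α i else if (i : ℕ) = (j : ℕ) + 1 then β j else 0

def jacobiMatrix {K : Type*} [Semiring K] (α β : ℕ → K) (n : ℕ) : Matrix (Fin n) (Fin n) K :=
  lowerBidiagonal α β n * (lowerBidiagonal α β n)ᵀ

section Bidiagonal
variable {K : Type*} [Field K] {n : ℕ} {α β : ℕ → K}

lemma lowerBidiagonal_apply_of_lt {i j : Fin n} (h : i < j) : lowerBidiagonal α β n i j = 0 := by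
  simp only [lowerBidiagonal, of_apply]
  rw [if_neg (by omega), if_neg (by omega)]

lemma lowerBidiagonal_apply_self (i : Fin n) : lowerBidiagonal α β n i i = α i := by
  simp [lowerBidiagonal]

lemma lowerBidiagonal_transpose_mulVec_apply (x : Fin n → K) {i : ℕ} (hi : i + 1 < n) :
    ((lowerBidiagonal α β n)ᵀ *ᵥ x) ⟨i, by omega⟩ =
      α i * x ⟨i, by omega⟩ + β i * x ⟨i + 1, hi⟩ := by
  simp only [mulVec, dotProduct, transpose_apply]
  rw [Fintype.sum_eq_add ⟨i, by omega⟩ ⟨i + 1, hi⟩ (by simp [Fin.ext_iff])]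
  · simp [lowerBidiagonal]
  · rintro j ⟨hj₁, hj₂⟩
    simp only [lowerBidiagonal, of_apply]
    rw [if_neg (fun h => hj₁ (Fin.ext h)), if_neg (fun h => hj₂ (Fin.ext h)), zero_mul]

lemma jacobiMatrix_apply_of_succ_lt {i j : Fin n} (h : (j : ℕ) + 1 < i) :
    jacobiMatrix α β n i j = 0 := by
  simp only [jacobiMatrix, mul_apply, transpose_apply, lowerBidiagonal, of_apply]
  refine Finset.sum_eq_zero fun l _ => ?_
  split_ifs <;> first | omega | simp

lemma jacobiMatrix_apply_succ {j : ℕ} (hj : j + 1 < n) :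
    jacobiMatrix α β n ⟨j + 1, hj⟩ ⟨j, by omega⟩ = β j * α j := by
  simp only [jacobiMatrix, mul_apply, transpose_apply]
  rw [Finset.sum_eq_single ⟨j, by omega⟩]
  · simp [lowerBidiagonal]
  · intro l _ hl
    have hl' : (l : ℕ) ≠ j := fun h => hl (Fin.ext h)
    simp only [lowerBidiagonal, of_apply]
    split_ifs <;> first | omega | simp
  · simp

end Bidiagonal

def residualDirection {K : Type*} [Field K] (α β : ℕ → K) (n k : ℕ) : Fin n → K :=
  fun i => if (i : ℕ) ≤ k then ∏ ℓ ∈ range i, -(α ℓ / β ℓ) else 0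

section ResidualDirection
variable {K : Type*} [Field K] {n k : ℕ} {α β : ℕ → K}

lemma residualDirection_zero (hn : 0 < n) : residualDirection α β n k ⟨0, hn⟩ = 1 := by
  simp [residualDirection]

lemma residualDirection_dotProduct_self (hk : k < n) :
    residualDirection α β n k ⬝ᵥ residualDirection α β n k =
      1 + ∑ j ∈ Icc 1 k, ∏ ℓ ∈ range j, α ℓ ^ 2 / β ℓ ^ 2 := by
  set q : ℕ → K := fun j => ∏ ℓ ∈ range j, α ℓ ^ 2 / β ℓ ^ 2
  have hsq (i : Fin n) : residualDirection α β n k i * residualDirection α β n k i =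
      if (i : ℕ) ≤ k then q i else 0 := by
    simp only [residualDirection, q]
    split_ifs
    · rw [← prod_mul_distrib]; exact prod_congr rfl fun _ _ => by ring
    · simp
  have hfilter : (range n).filter (· ≤ k) = Icc 0 k := by ext; simp; omega
  simp only [dotProduct, hsq]
  rw [Fin.sum_univ_eq_sum_range (fun j => if j ≤ k then q j else 0) n, ← sum_filter, hfilter,
    ← insert_Icc_add_one_left_eq_Icc (Nat.zero_le k), sum_insert (by simp)]
  simp [q]

variable (hβ : ∀ j, j + 1 < n → β j ≠ 0)
include hβ

lemma transpose_mulVec_residualDirection_apply (hk : k < n) (i : Fin n) (hi : (i : ℕ) < k) :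
    ((lowerBidiagonal α β n)ᵀ *ᵥ residualDirection α β n k) i = 0 := by
  obtain ⟨i, hin⟩ := i
  change i < k at hi
  rw [lowerBidiagonal_transpose_mulVec_apply _ (by omega : i + 1 < n)]
  simp only [residualDirection, if_pos hi.le, if_pos (show i + 1 ≤ k by omega), prod_range_succ]
  field_simp [hβ i (by omega)]
  ring

lemma eq_smul_residualDirection (hn : 0 < n) {u : Fin n → K} (hu : u ∈ supportedBelow K n (k + 1))
    (hHu : ∀ i : Fin n, (i : ℕ) < k → ((lowerBidiagonal α β n)ᵀ *ᵥ u) i = 0) :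
    u = u ⟨0, hn⟩ • residualDirection α β n k := by
  have hlead (i : ℕ) (hi : i < n) (hik : i ≤ k) :
      u ⟨i, hi⟩ = u ⟨0, hn⟩ * ∏ ℓ ∈ range i, -(α ℓ / β ℓ) := by
    induction i with
    | zero => simp
    | succ i ih =>
      have h := hHu ⟨i, by omega⟩ (by simp only; omega)
      rw [lowerBidiagonal_transpose_mulVec_apply _ hi, ih (by omega) (by omega)] at h
      rw [prod_range_succ]
      field_simp [hβ i hi] at h ⊢
      linear_combination h
  funext i
  by_cases hik : (i : ℕ) ≤ k
  · simp [residualDirection, hik, ← hlead i i.isLt hik]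
  · simp [residualDirection, hik, hu i (by omega)]

end ResidualDirection

theorem minimal_residual_eq_inv_residualDirection {K : Type*} [Field K] [LinearOrder K]
    [IsStrictOrderedRing K] {n k : ℕ} {α β : ℕ → K} (hα : ∀ j, j < n → α j ≠ 0)
    (hβ : ∀ j, j + 1 < n → β j ≠ 0) (hn : 0 < n) (hk : k < n) {c : Fin n → K}
    (hc : c ∈ supportedBelow K n k)
    (hmin : IsMinOn (fun c' => (Pi.single ⟨0, hn⟩ 1 - jacobiMatrix α β n *ᵥ c') ⬝ᵥ
      (Pi.single ⟨0, hn⟩ 1 - jacobiMatrix α β n *ᵥ c')) (supportedBelow K n k) c) :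
    (Pi.single ⟨0, hn⟩ 1 - jacobiMatrix α β n *ᵥ c) ⬝ᵥ
      (Pi.single ⟨0, hn⟩ 1 - jacobiMatrix α β n *ᵥ c) =
      (residualDirection α β n k ⬝ᵥ residualDirection α β n k)⁻¹ := by
  set H := lowerBidiagonal α β n
  set e₀ : Fin n → K := Pi.single ⟨0, hn⟩ 1
  set u := e₀ - jacobiMatrix α β n *ᵥ c
  set v := residualDirection α β n k
  have horth (y : Fin n → K) (hy : y ∈ supportedBelow K n k) :
      u ⬝ᵥ jacobiMatrix α β n *ᵥ y = 0 :=
    dotProduct_eq_zero_of_forall_dotProduct_self_le fun t => by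
      simpa [u, mulVec_add, mulVec_smul, sub_add_eq_sub_sub] using
        isMinOn_iff.1 hmin (c + t • y) (add_mem hc (Submodule.smul_mem _ t hy))
  have hu : u ∈ supportedBelow K n (k + 1) := by
    refine sub_mem (fun i hi => Pi.single_eq_of_ne (fun h => by simp [h] at hi) _) ?_
    exact mulVec_mem_supportedBelow_succ (fun i j => jacobiMatrix_apply_of_succ_lt) hc
  have hHu : ∀ i : Fin n, (i : ℕ) < k → (Hᵀ *ᵥ u) i = 0 := by
    refine eq_zero_of_lowerTriangular_mulVec_apply_eq_zero (L := H)
      (fun i j => lowerBidiagonal_apply_of_lt)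
      (fun i => by simpa [H, lowerBidiagonal_apply_self] using hα i i.isLt) fun i hi => ?_
    -- `H Hᵀ` is symmetric, so `(H Hᵀ u)ᵢ = u ⬝ᵥ H Hᵀ eᵢ`, which vanishes by `horth`
    rw [mulVec_mulVec, ← dotProduct_single_one ((H * Hᵀ) *ᵥ u) i, mul_transpose_mulVec_dotProduct,
      dotProduct_comm, ← mul_transpose_mulVec_dotProduct, dotProduct_comm]
    exact horth _ (fun j hj => Pi.single_eq_of_ne (fun h => by omega) _)
  have huv : u ⬝ᵥ v = 1 := by
    have hTv : ∀ i : Fin n, (i : ℕ) < k → (jacobiMatrix α β n *ᵥ v) i = 0 := by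
      rw [jacobiMatrix, ← mulVec_mulVec]
      exact mulVec_apply_eq_zero_of_lowerTriangular (fun i j => lowerBidiagonal_apply_of_lt)
        (transpose_mulVec_residualDirection_apply hβ hk)
    have hv₀ : v ⟨0, hn⟩ = 1 := residualDirection_zero hn
    rw [sub_dotProduct, single_one_dotProduct, hv₀, jacobiMatrix, mul_transpose_mulVec_dotProduct,
      dotProduct_comm, ← mul_transpose_mulVec_dotProduct, dotProduct_comm, ← jacobiMatrix,
      dotProduct_eq_zero_of_mem_supportedBelow hc hTv, sub_zero]
  obtain ⟨s, hs⟩ : ∃ s : K, u = s • v := ⟨_, eq_smul_residualDirection hβ hn hu hHu⟩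
  rw [hs, smul_dotProduct, smul_eq_mul] at huv
  rw [hs, smul_dotProduct, dotProduct_smul, smul_eq_mul, smul_eq_mul, huv, mul_one]
  exact eq_inv_of_mul_eq_one_left huv

theorem stmt7_general (N n : ℕ) (hn : 0 < n)
    (W : Matrix (Fin N) (Fin N) ℝ)
    (b : Fin N → ℝ)
    (α β : ℕ → ℝ) (hαpos : ∀ j, j < n → 0 < α j) (hβpos : ∀ j, j + 1 < n → 0 < β j)
    (H : Matrix (Fin n) (Fin n) ℝ)
    (hH : ∀ i j : Fin n, H i j =
      if (i : ℕ) = j then α i else if (i : ℕ) = (j : ℕ) + 1 then β j else 0)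
    (T : Matrix (Fin n) (Fin n) ℝ) (hT : T = H * Hᵀ)
    (Q : Matrix (Fin N) (Fin n) ℝ)
    (hQorth : Qᵀ * Q = 1)
    (hq1 : ∀ i, Q i ⟨0, hn⟩ = b i)
    (hWQ : W * Q = Q * T)
    (k : ℕ) (hk : k < n)
    (xk : Fin N → ℝ)
    (hxkmem : xk ∈ Submodule.span ℝ {v : Fin N → ℝ | ∃ j, j < k ∧ v = (W ^ j).mulVec b})
    (hxkmin : ∀ y ∈ Submodule.span ℝ {v : Fin N → ℝ | ∃ j, j < k ∧ v = (W ^ j).mulVec b},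
      (b - W.mulVec xk) ⬝ᵥ (b - W.mulVec xk) ≤ (b - W.mulVec y) ⬝ᵥ (b - W.mulVec y)) :
    Real.sqrt ((b - W.mulVec xk) ⬝ᵥ (b - W.mulVec xk)) =
      (Real.sqrt (1 + ∑ j ∈ Finset.Icc 1 k,
        ∏ ℓ ∈ Finset.range j, (α ℓ) ^ 2 / (β ℓ) ^ 2))⁻¹ := by
  have hT' : T = jacobiMatrix α β n := by rw [hT, show H = lowerBidiagonal α β n from ext hH]; rfl
  subst hT'
  set e₀ : Fin n → ℝ := Pi.single ⟨0, hn⟩ 1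
  have hbQ : b = Q *ᵥ e₀ := by ext i; rw [mulVec_single_one]; exact (hq1 i).symm
  have hK : krylovSubspace W b k = (supportedBelow ℝ n k).map Q.mulVecLin := by
    rw [hbQ, krylovSubspace_mulVec_of_mul_eq_mul hWQ, krylovSubspace_single_zero
      (fun i j => jacobiMatrix_apply_of_succ_lt) hn ?_ hk.le]
    rintro ⟨i, hi⟩ ⟨j, hj⟩ (rfl : i = j + 1)
    rw [jacobiMatrix_apply_succ hi]
    exact mul_ne_zero (hβpos j hi).ne' (hαpos j hj).ne'
  have hres (c : Fin n → ℝ) : b - W *ᵥ (Q *ᵥ c) = Q *ᵥ (e₀ - jacobiMatrix α β n *ᵥ c) := by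
    rw [mulVec_mulVec, hWQ, ← mulVec_mulVec, hbQ, ← mulVec_sub]
  have hxk : xk ∈ (supportedBelow ℝ n k).map Q.mulVecLin := hK ▸ hxkmem
  obtain ⟨c, hc, rfl⟩ := hxk
  have hmin : IsMinOn (fun c' => (e₀ - jacobiMatrix α β n *ᵥ c') ⬝ᵥ
      (e₀ - jacobiMatrix α β n *ᵥ c')) (supportedBelow ℝ n k) c := by
    refine isMinOn_iff.2 fun c' hc' => ?_
    have h := hxkmin (Q *ᵥ c') (hK ▸ Submodule.mem_map_of_mem hc' : Q *ᵥ c' ∈ krylovSubspace W b k)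
    simpa only [mulVecLin_apply, hres, mulVec_dotProduct_mulVec_of_transpose_mul_self hQorth]
      using h
  rw [mulVecLin_apply, hres, mulVec_dotProduct_mulVec_of_transpose_mul_self hQorth,
    minimal_residual_eq_inv_residualDirection (fun j hj => (hαpos j hj).ne')
      (fun j hj => (hβpos j hj).ne') hn hk hc hmin, Real.sqrt_inv,
    residualDirection_dotProduct_self hk]

/-- Deterministic MINRES residual formula: for MINRES applied to `W x = b` with `W`
symmetric positive definite, `‖b‖₂ = 1` and `x₀ = 0`, with the Cholesky data
`α, β` of the Lanczos Jacobi matrix `T = H Hᵀ`, one has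
`‖r_k‖₂ = (1 + ∑_{j=1}^k ∏_{ℓ<j} α_ℓ²/β_ℓ²)^{-1/2}` for `k < n`. -/
theorem stmt7 (N n : ℕ) (hn : 0 < n) (hnN : n ≤ N)
    (W : Matrix (Fin N) (Fin N) ℝ) (hW : W.PosDef)
    (b : Fin N → ℝ) (hb : b ⬝ᵥ b = 1)
    (α β : ℕ → ℝ) (hαpos : ∀ j, j < n → 0 < α j) (hβpos : ∀ j, j + 1 < n → 0 < β j)
    (H : Matrix (Fin n) (Fin n) ℝ)
    (hH : ∀ i j : Fin n, H i j =
      if (i : ℕ) = j then α i else if (i : ℕ) = (j : ℕ) + 1 then β j else 0)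
    (T : Matrix (Fin n) (Fin n) ℝ) (hT : T = H * Hᵀ)
    (Q : Matrix (Fin N) (Fin n) ℝ)
    (hQorth : Qᵀ * Q = 1)
    (hq1 : ∀ i, Q i ⟨0, hn⟩ = b i)
    (hWQ : W * Q = Q * T)
    (k : ℕ) (hk : k < n)
    (xk : Fin N → ℝ)
    (hxkmem : xk ∈ Submodule.span ℝ {v : Fin N → ℝ | ∃ j, j < k ∧ v = (W ^ j).mulVec b})
    (hxkmin : ∀ y ∈ Submodule.span ℝ {v : Fin N → ℝ | ∃ j, j < k ∧ v = (W ^ j).mulVec b},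
      (b - W.mulVec xk) ⬝ᵥ (b - W.mulVec xk) ≤ (b - W.mulVec y) ⬝ᵥ (b - W.mulVec y)) :
    Real.sqrt ((b - W.mulVec xk) ⬝ᵥ (b - W.mulVec xk)) =
      (Real.sqrt (1 + ∑ j ∈ Finset.Icc 1 k,
        ∏ ℓ ∈ Finset.range j, (α ℓ) ^ 2 / (β ℓ) ^ 2))⁻¹ :=
  stmt7_general N n hn W b α β hαpos hβpos H hH T hT Q hQorth hq1 hWQ k hk xk hxkmem hxkmin
end
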